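/- Let m_P be the perfect metric. Let H be the set of arcs of G^∧π remaining after deleting every arc (x,y) for which there exists an intermediate or upper triangle {x,y,z} with m_P(x,y) = m_P(x,z) + m_P(z,y) (where m_P(u,v) denotes the weight of the edge {u,v} of G*π). Then for all vertices s and t there exists an up-down st-path all of whose arcs belong to H and whose length under m_P equals the shortest st-path distance in G under w. -/

import Mathlib

open SimpleGraph
open scoped ENNReal

variable {V : Type*}

/-- One step of vertex contraction: remove `v` from the current graph and add an edge
between every pair of its current neighbors. -/
def chStep (H : SimpleGraph V) (v : V) : SimpleGraph V where
  Adj a b := a ≠ b ∧ a ≠ v ∧ b ≠ v ∧ (H.Adj a b ∨ (H.Adj v a ∧ H.Adj v b))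
  symm := by
    constructor
    rintro a b ⟨h1, h2, h3, h4⟩
    refine ⟨h1.symm, h3, h2, ?_⟩
    rcases h4 with h | ⟨ha, hb⟩
    · exact Or.inl h.symm
    · exact Or.inr ⟨hb, ha⟩
  loopless := ⟨fun a h => h.1 rfl⟩

/-- All edges ever present while contracting the vertices of the list in order:
the edges of the initial graph together with all added shortcuts. -/
def chList : SimpleGraph V → List V → SimpleGraph V
  | H, [] => H
  | H, v :: l => H ⊔ chList (chStep H v) l

/-- The rank of a vertex with respect to the contraction order `π`. -/
def rk {n : ℕ} (π : Fin n ≃ V) (v : V) : ℕ := (π.symm v : ℕ)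

/-- The contraction hierarchy `G*π`: contract `π 0, π 1, …` in this order and collect
all original edges and all added shortcuts. -/
def chGraph {n : ℕ} (G : SimpleGraph V) (π : Fin n ≃ V) : SimpleGraph V :=
  chList G ((List.finRange n).map ⇑π)

/-- A list of vertices is up-down w.r.t. a rank function: ranks strictly increase
along a prefix and strictly decrease along the remaining suffix, the two parts
meeting at the maximum-rank vertex. -/
def IsUpDown (r : V → ℕ) (l : List V) : Prop :=
  ∃ l₁ x l₂, l = l₁ ++ x :: l₂ ∧
    List.Chain' (fun a b => r a < r b) (l₁ ++ [x]) ∧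
    List.Chain' (fun a b => r b < r a) (x :: l₂)

/-- Reachability in the upward directed graph `G^∧π` (edges of `G*π` directed from
lower to higher rank): the vertex set of the search space `SS v`. -/
def UpReach {n : ℕ} (G : SimpleGraph V) (π : Fin n ≃ V) (v u : V) : Prop :=
  Relation.ReflTransGen (fun a b => (chGraph G π).Adj a b ∧ rk π a < rk π b) v u

/-- Length of a walk: the sum of the weights of its edges. -/
noncomputable def wlen {H : SimpleGraph V} (m : V → V → ℝ≥0∞) {s t : V}
    (p : H.Walk s t) : ℝ≥0∞ :=
  (p.darts.map (fun d => m d.toProd.1 d.toProd.2)).sum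

/-- Shortest path distance in a graph `H` under edge weights `m`. -/
noncomputable def gdist (H : SimpleGraph V) (m : V → V → ℝ≥0∞) (s t : V) : ℝ≥0∞ :=
  ⨅ (p : H.Walk s t), wlen m p

/-- Minimum length of an up-down `s`-`t` path in `G*π`. -/
noncomputable def updist {n : ℕ} (G : SimpleGraph V) (π : Fin n ≃ V)
    (m : V → V → ℝ≥0∞) (s t : V) : ℝ≥0∞ :=
  ⨅ (p : (chGraph G π).Walk s t) (_ : IsUpDown (rk π) p.support), wlen m p

/-- Minimum length of a strictly rank-increasing `u`-`v` path in `G*π`. -/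
noncomputable def upOnlyDist {n : ℕ} (G : SimpleGraph V) (π : Fin n ≃ V)
    (m : V → V → ℝ≥0∞) (u v : V) : ℝ≥0∞ :=
  ⨅ (p : (chGraph G π).Walk u v)
    (_ : List.Chain' (fun a b => rk π a < rk π b) p.support), wlen m p

/-- `S` is a balanced separator of the subgraph of `G` induced by `U`. -/
def IsBalancedSepOn [DecidableEq V] (G : SimpleGraph V) (U S : Finset V) : Prop :=
  S ⊆ U ∧ ∃ A B : Finset V, A ⊆ U ∧ B ⊆ U ∧
    Disjoint A B ∧ Disjoint A S ∧ Disjoint B S ∧ A ∪ B ∪ S = U ∧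
    (∀ a ∈ A, ∀ b ∈ B, ¬ G.Adj a b) ∧
    3 * A.card ≤ 2 * U.card ∧ 3 * B.card ≤ 2 * U.card

/-- Nested dissection orders (as lists, earliest contracted first, separator last)
of induced subgraphs of `G`, in which the separator chosen at every recursion step on
a `k`-vertex subgraph is balanced and has cardinality at most `c * k ^ α`. -/
inductive IsNDOrder [DecidableEq V] (G : SimpleGraph V) (c α : ℝ) : Finset V → List V → Prop
  | empty : IsNDOrder G c α ∅ []
  | step {U S A B : Finset V} {lA lB lS : List V} :
      Disjoint A B → Disjoint A S → Disjoint B S → A ∪ B ∪ S = U →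
      (∀ a ∈ A, ∀ b ∈ B, ¬ G.Adj a b) →
      3 * A.card ≤ 2 * U.card → 3 * B.card ≤ 2 * U.card →
      ((S.card : ℝ) ≤ c * (U.card : ℝ) ^ α) →
      lS.Nodup → lS.toFinset = S →
      IsNDOrder G c α A lA → IsNDOrder G c α B lB →
      IsNDOrder G c α U (lA ++ lB ++ lS)

/-- Number of vertices of the search space `SS v` in `G^∧π`. -/
noncomputable def nVertsSS {n : ℕ} (G : SimpleGraph V) (π : Fin n ≃ V) (v : V) : ℕ :=
  {u | UpReach G π v u}.ncard

/-- Number of arcs of the search space `SS v` in `G^∧π`: arcs of `G^∧π` with both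
endpoints reachable from `v`. -/
noncomputable def nArcsSS {n : ℕ} (G : SimpleGraph V) (π : Fin n ≃ V) (v : V) : ℕ :=
  {q : V × V | (chGraph G π).Adj q.1 q.2 ∧ rk π q.1 < rk π q.2 ∧
    UpReach G π v q.1 ∧ UpReach G π v q.2}.ncard

/-- The rank sequence of a walk: for each edge, the minimum of the ranks of its
endpoints, sorted in decreasing order. -/
def rankSeq {H : SimpleGraph V} (r : V → ℕ) {s t : V} (p : H.Walk s t) : List ℕ :=
  (p.darts.map (fun d => min (r d.toProd.1) (r d.toProd.2))).insertionSort (· ≥ ·)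

/-- Directed length of a walk in `G*π` under a pair of directed metrics `(mu, md)`:
each edge traversed from lower rank to higher rank costs its upward weight,
each edge traversed from higher rank to lower rank costs its downward weight. -/
noncomputable def dlen {H : SimpleGraph V} (r : V → ℕ) (mu md : V → V → ℝ≥0∞)
    {s t : V} (p : H.Walk s t) : ℝ≥0∞ :=
  (p.darts.map (fun d =>
    if r d.toProd.1 < r d.toProd.2 then mu d.toProd.1 d.toProd.2
    else md d.toProd.2 d.toProd.1)).sum

/-- Length of a directed walk `s :: l` under arc weights `wD`. -/
noncomputable def dWalkLen (wD : V → V → ℝ≥0∞) : V → List V → ℝ≥0∞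
  | _, [] => 0
  | s, x :: l => wD s x + dWalkLen wD x l

/-- Shortest directed path distance in the directed graph `D` under arc weights `wD`. -/
noncomputable def ddist (D : V → V → Prop) (wD : V → V → ℝ≥0∞) (s t : V) : ℝ≥0∞ :=
  ⨅ (l : List V) (_ : List.Chain D s l ∧ l.getLastD s = t), dWalkLen wD s l

/-!
A shortest `s`-`t` path of `G` is also a shortest chain of `G*π` for the perfect metric `m_P`,
and shortest chains are simple, so there are finitely many. Take one maximizing the potential
`Σ 3 ^ (smaller rank of the edge)` over its edges. If it had a valley `a, v, b`, the edge `{a, b}`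
exists in `G*π` (the higher neighbours of `v` form a clique) and shortcutting `v` keeps it
shortest; if it used a deleted arc, the two edges through the witness `z` can replace it. Both
moves raise the potential, so the maximizer has no valley, i.e. it is up-down, and uses only
arcs of `H`.
-/

section ConsecSum

variable {M : Type*} [AddCommMonoid M]

def consecSum (f : V → V → M) : List V → M
  | a :: b :: l => f a b + consecSum f (b :: l)
  | _ => 0

@[simp] lemma consecSum_nil (f : V → V → M) : consecSum f [] = 0 := rfl

@[simp] lemma consecSum_singleton (f : V → V → M) (a : V) : consecSum f [a] = 0 := rfl

@[simp] lemma consecSum_cons_cons (f : V → V → M) (a b : V) (l : List V) :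
    consecSum f (a :: b :: l) = f a b + consecSum f (b :: l) := rfl

lemma consecSum_append_cons (f : V → V → M) (l₁ : List V) (a : V) (l₂ : List V) :
    consecSum f (l₁ ++ a :: l₂) = consecSum f (l₁ ++ [a]) + consecSum f (a :: l₂) := by
  induction l₁ with
  | nil => simp
  | cons x l₁ ih =>
    cases l₁ with
    | nil => simp
    | cons y l₁ =>
      simp only [List.cons_append, consecSum_cons_cons] at ih ⊢
      rw [ih, add_assoc]

lemma consecSum_splice (f : V → V → M) (l₁ : List V) (a : V) (m : List V) (b : V)
    (l₂ : List V) :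
    consecSum f (l₁ ++ a :: (m ++ b :: l₂)) =
      consecSum f (l₁ ++ [a]) + consecSum f (a :: (m ++ [b])) + consecSum f (b :: l₂) := by
  rw [consecSum_append_cons, show a :: (m ++ b :: l₂) = (a :: m) ++ b :: l₂ from rfl,
    consecSum_append_cons (l₁ := a :: m), List.cons_append, add_assoc]

lemma consecSum_le_consecSum [PartialOrder M] [IsOrderedAddMonoid M] {R : V → V → Prop}
    {f g : V → V → M} (hfg : ∀ a b, R a b → f a b ≤ g a b) {l : List V} (hl : l.IsChain R) :
    consecSum f l ≤ consecSum g l := by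
  induction l using List.twoStepInduction with
  | nil => rfl
  | singleton x => rfl
  | cons_cons x y l _ ih =>
    obtain ⟨hxy, hl⟩ := List.isChain_cons_cons.1 hl
    exact add_le_add (hfg x y hxy) (ih y hl)

end ConsecSum

section ChainFromTo

variable {R : V → V → Prop} {s t : V} {l : List V}

def ChainFromTo (R : V → V → Prop) (s t : V) (l : List V) : Prop :=
  l.IsChain R ∧ l.head? = some s ∧ l.getLast? = some t

lemma ChainFromTo.mono {S : V → V → Prop} (hRS : ∀ a b, R a b → S a b)
    (h : ChainFromTo R s t l) : ChainFromTo S s t l :=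
  ⟨h.1.imp fun _ _ => hRS _ _, h.2⟩

lemma chainFromTo_cons_append_singleton {a b : V} {m : List V} :
    ChainFromTo R a b (a :: (m ++ [b])) ↔ (a :: (m ++ [b])).IsChain R := by
  simp [ChainFromTo, List.getLast?_cons]

lemma chainFromTo_append_cons {l₁ l₂ : List V} {a : V} :
    ChainFromTo R s t (l₁ ++ a :: l₂) ↔
      ChainFromTo R s a (l₁ ++ [a]) ∧ ChainFromTo R a t (a :: l₂) := by
  have hhead : (l₁ ++ a :: l₂).head? = (l₁ ++ [a]).head? := by cases l₁ <;> simp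
  have hlast : (l₁ ++ a :: l₂).getLast? = (a :: l₂).getLast? := by
    rw [List.getLast?_append]; cases h : (a :: l₂).getLast? <;> simp_all
  rw [ChainFromTo, ChainFromTo, ChainFromTo, List.isChain_split, hhead, hlast,
    List.getLast?_concat, List.head?_cons]
  tauto

lemma chainFromTo_splice {l₁ m l₂ : List V} {a b : V} :
    ChainFromTo R s t (l₁ ++ a :: (m ++ b :: l₂)) ↔
      ChainFromTo R s a (l₁ ++ [a]) ∧ (a :: (m ++ [b])).IsChain R ∧
        ChainFromTo R b t (b :: l₂) := by
  rw [chainFromTo_append_cons, show a :: (m ++ b :: l₂) = (a :: m) ++ b :: l₂ from rfl,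
    chainFromTo_append_cons (l₁ := a :: m), List.cons_append, chainFromTo_cons_append_singleton]

lemma le_consecSum_of_chainFromTo {D : V → V → ℝ≥0∞} (htri : ∀ a b c, D a c ≤ D a b + D b c)
    (hself : ∀ a, D a a = 0) (h : ChainFromTo R s t l) : D s t ≤ consecSum D l := by
  induction l using List.twoStepInduction generalizing s with
  | nil => simp [ChainFromTo] at h
  | singleton x =>
    obtain ⟨-, hs, ht⟩ := h
    simp only [List.head?_cons, List.getLast?_singleton, Option.some.injEq] at hs ht
    simp [← hs, ← ht, hself]
  | cons_cons x y l _ ih =>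
    obtain ⟨hc, hs, ht⟩ := h
    obtain rfl : x = s := by simpa using hs
    calc D x t ≤ D x y + D y t := htri x y t
      _ ≤ D x y + consecSum D (y :: l) := by
        gcongr; exact ih y ⟨hc.of_cons, rfl, by simpa using ht⟩
      _ = consecSum D (x :: y :: l) := rfl

end ChainFromTo

section Walks

variable {H : SimpleGraph V} {s t : V}

lemma wlen_eq_consecSum_support (m : V → V → ℝ≥0∞) (p : H.Walk s t) :
    wlen m p = consecSum m p.support := by
  induction p with
  | nil => simp [wlen]
  | cons h p ih =>
    rw [Walk.support_cons, ← p.cons_tail_support, consecSum_cons_cons, p.cons_tail_support, ← ih]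
    simp [wlen]

lemma chainFromTo_support (p : H.Walk s t) : ChainFromTo H.Adj s t p.support :=
  ⟨p.isChain_adj_support, by rw [← p.cons_tail_support]; rfl,
    by rw [List.getLast?_eq_some_getLast p.support_ne_nil, Walk.getLast_support]⟩

lemma exists_walk_support_eq {l : List V} (h : ChainFromTo H.Adj s t l) :
    ∃ p : H.Walk s t, p.support = l := by
  obtain ⟨hc, hs, ht⟩ := h
  have hne : l ≠ [] := by rintro rfl; simp at hs
  exact ⟨(Walk.ofSupport l hne hc).copy ((List.head_eq_iff_head?_eq_some hne).2 hs)
    ((List.getLast_eq_iff_getLast?_eq_some hne).2 ht), by simp⟩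

lemma SimpleGraph.Walk.rel_of_mem_darts {R : V → V → Prop} {p : H.Walk s t}
    (hp : p.support.IsChain R) {d : H.Dart} (hd : d ∈ p.darts) : R d.fst d.snd :=
  List.isChain_pair.1 (hp.infix (Walk.mem_darts_iff_fst_snd_infix_support.1 hd))

lemma wlen_bypass_le [DecidableEq V] (m : V → V → ℝ≥0∞) (p : H.Walk s t) :
    wlen m p.bypass ≤ wlen m p :=
  ((Walk.darts_bypass_sublist_darts p).map _).sum_le_sum fun _ _ => zero_le

lemma wlen_reverse (m : V → V → ℝ≥0∞) (hm : ∀ a b, m a b = m b a) (p : H.Walk s t) :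
    wlen m p.reverse = wlen m p := by
  simp only [wlen, Walk.darts_reverse, List.map_reverse, List.sum_reverse, List.map_map]
  congr 1
  exact List.map_congr_left fun d _ => hm _ _

end Walks

section ShortestPathDistance

variable {H : SimpleGraph V} {w : V → V → ℝ≥0∞} {s t : V}

lemma gdist_le_wlen (p : H.Walk s t) : gdist H w s t ≤ wlen w p := iInf_le _ p

lemma gdist_self (s : V) : gdist H w s s = 0 :=
  le_antisymm ((gdist_le_wlen .nil).trans_eq (by simp [wlen])) zero_le

lemma gdist_le_of_adj {a b : V} (h : H.Adj a b) : gdist H w a b ≤ w a b :=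
  (gdist_le_wlen (.cons h .nil)).trans_eq (by simp [wlen])

lemma gdist_triangle (a b c : V) : gdist H w a c ≤ gdist H w a b + gdist H w b c := by
  simp only [gdist, ENNReal.iInf_add, ENNReal.add_iInf]
  exact le_iInf₂ fun q p => iInf_le_of_le (p.append q) (by simp [wlen])

lemma gdist_comm (hw : ∀ a b, w a b = w b a) (a b : V) : gdist H w a b = gdist H w b a := by
  have key : ∀ x y, gdist H w x y ≤ gdist H w y x := fun x y =>
    le_iInf fun q => (gdist_le_wlen q.reverse).trans_eq (wlen_reverse w hw q)
  exact le_antisymm (key a b) (key b a)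

lemma wlen_ne_top (hw : ∀ a b, H.Adj a b → w a b ≠ ⊤) (p : H.Walk s t) : wlen w p ≠ ⊤ := by
  induction p with
  | nil => simp [wlen]
  | cons h p ih =>
    simp only [wlen, Walk.darts_cons, List.map_cons, List.sum_cons] at ih ⊢
    exact ENNReal.add_ne_top.2 ⟨hw _ _ h, ih⟩

lemma gdist_ne_top (hw : ∀ a b, H.Adj a b → w a b ≠ ⊤) (h : H.Reachable s t) :
    gdist H w s t ≠ ⊤ :=
  let ⟨p⟩ := h
  ne_top_of_le_ne_top (wlen_ne_top hw p) (gdist_le_wlen p)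

/-- The minimum over the finitely many paths bounds every walk from below, since bypassing a walk
does not increase its length. -/
lemma exists_chainFromTo_consecSum_eq_gdist [Finite V] (h : H.Reachable s t) :
    ∃ l, ChainFromTo H.Adj s t l ∧ consecSum w l = gdist H w s t := by
  classical
  have : Fintype V := Fintype.ofFinite V
  let S := {l : List V | ChainFromTo H.Adj s t l ∧ l.Nodup}
  have hS : S.Finite := (List.finite_length_le V (Fintype.card V)).subset
    fun l hl => hl.2.length_le_card
  have mem_S (p : H.Walk s t) : p.bypass.support ∈ S :=
    ⟨chainFromTo_support _, p.bypass_isPath.support_nodup⟩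
  obtain ⟨p⟩ := h
  obtain ⟨l, hl, hmin⟩ := S.exists_min_image (consecSum w) hS ⟨_, mem_S p⟩
  refine ⟨l, hl.1, le_antisymm (le_iInf fun q => ?_) ?_⟩
  · calc consecSum w l ≤ consecSum w q.bypass.support := hmin _ (mem_S q)
      _ = wlen w q.bypass := (wlen_eq_consecSum_support w _).symm
      _ ≤ wlen w q := wlen_bypass_le w q
  · obtain ⟨q, rfl⟩ := exists_walk_support_eq hl.1
    exact (wlen_eq_consecSum_support w q) ▸ gdist_le_wlen q

lemma gdist_pos [Finite V] (hw : ∀ a b, H.Adj a b → 0 < w a b) (h : H.Reachable s t)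
    (hst : s ≠ t) : 0 < gdist H w s t := by
  obtain ⟨l, ⟨hc, hs, ht⟩, hl⟩ := exists_chainFromTo_consecSum_eq_gdist (w := w) h
  rw [← hl]
  rcases l with _ | ⟨x, _ | ⟨y, l⟩⟩
  · simp at hs
  · simp only [List.head?_cons, List.getLast?_singleton, Option.some.injEq] at hs ht
    exact absurd (hs.symm.trans ht) hst
  · obtain rfl : x = s := by simpa using hs
    exact (hw x y (List.isChain_cons_cons.1 hc).1).trans_le (by simp)

end ShortestPathDistance

section ContractionHierarchy

lemma le_chList : ∀ (H : SimpleGraph V) (l : List V), H ≤ chList H l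
  | _, [] => le_rfl
  | _, _ :: _ => le_sup_left

lemma chList_not_adj_of_forall_not_adj {u : V} :
    ∀ (H : SimpleGraph V) (l : List V), (∀ y, ¬ H.Adj u y) → ∀ y, ¬ (chList H l).Adj u y
  | _, [], h => h
  | H, v :: l, h => fun y hy => by
    rcases hy with hy | hy
    · exact h y hy
    · refine chList_not_adj_of_forall_not_adj (chStep H v) l ?_ y hy
      rintro z ⟨-, -, -, hz | ⟨hz, -⟩⟩
      exacts [h z hz, h v hz.symm]

lemma chList_adj_of_adj_of_adj (r : V → ℕ) {v a b : V} (hva : r v < r a) (hvb : r v < r b)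
    (hab : a ≠ b) :
    ∀ (H : SimpleGraph V) (l : List V), l.Pairwise (fun x y => r x < r y) → v ∈ l →
      (chList H l).Adj v a → (chList H l).Adj v b → (chList H l).Adj a b
  | _, [], _, hv, _, _ => absurd hv List.not_mem_nil
  | H, x :: l, hl, hv, ha, hb => by
    rw [List.pairwise_cons] at hl
    rcases List.mem_cons.1 hv with rfl | hv
    · have hiso := chList_not_adj_of_forall_not_adj (chStep H v) l fun y hy => hy.2.1 rfl
      have hHa : H.Adj v a := ha.resolve_right (hiso a)
      have hHb : H.Adj v b := hb.resolve_right (hiso b)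
      exact Or.inr (le_chList _ _
        ⟨hab, (hva.ne' <| congrArg r ·), (hvb.ne' <| congrArg r ·), Or.inr ⟨hHa, hHb⟩⟩)
    · have hxv := hl.1 v hv
      have lift {c : V} (hvc : r v < r c) (hc : (chList H (x :: l)).Adj v c) :
          (chList (chStep H x) l).Adj v c := by
        refine hc.elim (fun h => le_chList _ _ ⟨h.ne, ?_, ?_, Or.inl h⟩) id
        · rintro rfl; exact lt_irrefl _ hxv
        · rintro rfl; omega
      exact Or.inr (chList_adj_of_adj_of_adj r hva hvb hab _ l hl.2 hv (lift hva ha) (lift hvb hb))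

variable {n : ℕ} (G : SimpleGraph V) (π : Fin n ≃ V)

lemma le_chGraph : G ≤ chGraph G π := le_chList _ _

lemma rk_injective : Function.Injective (rk π) :=
  fun _ _ h => π.symm.injective (Fin.val_injective h)

lemma chGraph_adj_of_adj_of_adj {v a b : V} (hva : rk π v < rk π a) (hvb : rk π v < rk π b)
    (hab : a ≠ b) (ha : (chGraph G π).Adj v a) (hb : (chGraph G π).Adj v b) :
    (chGraph G π).Adj a b := by
  refine chList_adj_of_adj_of_adj (rk π) hva hvb hab G _ ?_ (by simpa using π.surjective v) ha hb
  simpa [List.pairwise_map, rk] using List.pairwise_lt_finRange n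

end ContractionHierarchy

section Valleys

variable {r : V → ℕ}

def HasValley (r : V → ℕ) (l : List V) : Prop :=
  ∃ l₁ a v b l₂, l = l₁ ++ a :: v :: b :: l₂ ∧ r v < r a ∧ r v < r b

lemma HasValley.cons {l : List V} (h : HasValley r l) (x : V) : HasValley r (x :: l) := by
  obtain ⟨l₁, a, v, b, l₂, rfl, hva, hvb⟩ := h
  exact ⟨x :: l₁, a, v, b, l₂, rfl, hva, hvb⟩

lemma IsUpDown.cons {x y : V} {l : List V} (h : IsUpDown r (y :: l)) (hxy : r x < r y) :
    IsUpDown r (x :: y :: l) := by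
  obtain ⟨l₁, c, l₂, hl, hup, hdown⟩ := h
  refine ⟨x :: l₁, c, l₂, by rw [hl, List.cons_append], List.isChain_cons.2 ⟨?_, hup⟩, hdown⟩
  have : (l₁ ++ [c]).head? = some y := by cases l₁ <;> simp_all
  simpa [this]

lemma isChain_gt_of_not_hasValley :
    ∀ {x y : V} {l : List V}, r y < r x → ¬ HasValley r (x :: y :: l) →
      (y :: l).IsChain (fun a b => r a ≠ r b) → (x :: y :: l).IsChain (fun a b => r b < r a)
  | _, _, [], hyx, _, _ => List.isChain_pair.2 hyx
  | x, y, c :: l, hyx, hnv, hne => by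
    obtain ⟨hyc, hne⟩ := List.isChain_cons_cons.1 hne
    have hcy : r c < r y := (lt_or_gt_of_ne hyc.symm).resolve_right
      fun hyc => hnv ⟨[], x, y, c, l, rfl, hyx, hyc⟩
    exact List.isChain_cons_cons.2
      ⟨hyx, isChain_gt_of_not_hasValley hcy (fun h => hnv (h.cons x)) hne⟩

lemma isUpDown_of_not_hasValley :
    ∀ (x : V) (l : List V), ¬ HasValley r (x :: l) →
      (x :: l).IsChain (fun a b => r a ≠ r b) → IsUpDown r (x :: l)
  | x, [], _, _ => ⟨[], x, [], rfl, .singleton x, .singleton x⟩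
  | x, y :: l, hnv, hne => by
    obtain ⟨hxy, hne'⟩ := List.isChain_cons_cons.1 hne
    rcases lt_or_gt_of_ne hxy with h | h
    · exact (isUpDown_of_not_hasValley y l (fun h => hnv (h.cons x)) hne').cons h
    · exact ⟨[], x, y :: l, rfl, .singleton x, isChain_gt_of_not_hasValley h hnv hne'⟩

end Valleys

/-- With base `3` both moves raise the potential: removing a valley `a, v, b` trades two edges
of level `r v` for one of level `> r v`, and inserting a witness keeps the level of the replaced
edge and adds another edge. -/
def rankPotential (r : V → ℕ) : List V → ℕ :=
  consecSum fun a b => 3 ^ min (r a) (r b)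

lemma consecSum_splice_lt_splice (f : V → V → ℕ) {l₁ m m' l₂ : List V} {a b : V}
    (h : consecSum f (a :: (m ++ [b])) < consecSum f (a :: (m' ++ [b]))) :
    consecSum f (l₁ ++ a :: (m ++ b :: l₂)) < consecSum f (l₁ ++ a :: (m' ++ b :: l₂)) := by
  rw [consecSum_splice, consecSum_splice]
  omega

lemma three_pow_min_add_three_pow_min_lt {i j k : ℕ} (hi : k < i) (hj : k < j) :
    3 ^ min i k + 3 ^ min k j < 3 ^ min i j := by
  rw [min_eq_right hi.le, min_eq_left hj.le]
  calc 3 ^ k + 3 ^ k < 3 ^ (k + 1) := by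
        rw [pow_succ]; have := Nat.one_le_pow k 3 (by norm_num); omega
    _ ≤ 3 ^ min i j := Nat.pow_le_pow_right (by norm_num) (by omega)

lemma three_pow_min_lt_add_three_pow_min {i j k : ℕ} (hk : min i j ≤ k) :
    3 ^ min i j < 3 ^ min i k + 3 ^ min k j := by
  rcases le_total i j with h | h
  · rw [min_eq_left h] at hk ⊢
    rw [min_eq_left hk]
    exact Nat.lt_add_of_pos_right (by positivity)
  · rw [min_eq_right h] at hk ⊢
    rw [min_eq_right hk]
    exact Nat.lt_add_of_pos_left (by positivity)

section ShortestChains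

variable {C : SimpleGraph V} {r : V → ℕ} {D : V → V → ℝ≥0∞} {s t : V} {l : List V}

def IsShortestChain (C : SimpleGraph V) (D : V → V → ℝ≥0∞) (s t : V) (l : List V) : Prop :=
  ChainFromTo C.Adj s t l ∧ consecSum D l = D s t

/-- The arcs of `H`, for `C = G*π`, `r = rk π` and `D = m_P`. -/
def IsKeptArc (C : SimpleGraph V) (r : V → ℕ) (D : V → V → ℝ≥0∞) (x y : V) : Prop :=
  r x < r y ∧ ¬ ∃ z, C.Adj x z ∧ C.Adj z y ∧ r x < r z ∧ D x y = D x z + D z y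

lemma exists_witness_of_not_isKeptArc (hsymm : ∀ a b, D a b = D b a) {a b : V}
    (hab : r a ≠ r b) (h₁ : ¬ IsKeptArc C r D a b) (h₂ : ¬ IsKeptArc C r D b a) :
    ∃ z, C.Adj a z ∧ C.Adj z b ∧ min (r a) (r b) < r z ∧ D a b = D a z + D z b := by
  simp only [IsKeptArc, not_and, not_not] at h₁ h₂
  rcases lt_or_gt_of_ne hab with h | h
  · obtain ⟨z, haz, hzb, hz, hD⟩ := h₁ h
    exact ⟨z, haz, hzb, by omega, hD⟩
  · obtain ⟨z, hbz, hza, hz, hD⟩ := h₂ h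
    refine ⟨z, hza.symm, hbz.symm, by omega, ?_⟩
    rw [hsymm a b, hD, hsymm b z, hsymm z a, add_comm]

lemma IsShortestChain.splice (htri : ∀ a b c, D a c ≤ D a b + D b c) (hself : ∀ a, D a a = 0)
    {l₁ m m' l₂ : List V} {a b : V} (h : IsShortestChain C D s t (l₁ ++ a :: (m ++ b :: l₂)))
    (hc : (a :: (m' ++ [b])).IsChain C.Adj)
    (hle : consecSum D (a :: (m' ++ [b])) ≤ consecSum D (a :: (m ++ [b]))) :
    IsShortestChain C D s t (l₁ ++ a :: (m' ++ b :: l₂)) := by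
  obtain ⟨hpre, -, hsuf⟩ := chainFromTo_splice.1 h.1
  have hchain := chainFromTo_splice.2 ⟨hpre, hc, hsuf⟩
  refine ⟨hchain, le_antisymm ?_ (le_consecSum_of_chainFromTo htri hself hchain)⟩
  rw [consecSum_splice, ← h.2, consecSum_splice]
  gcongr

/-- Shortest chains are simple: a repeated vertex would enclose a closed subchain of positive
length that could be cut out. -/
lemma IsShortestChain.nodup (htri : ∀ a b c, D a c ≤ D a b + D b c) (hself : ∀ a, D a a = 0)
    (hpos : ∀ a b, a ≠ b → 0 < D a b) (hfin : D s t ≠ ⊤) (h : IsShortestChain C D s t l) :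
    l.Nodup := by
  rw [List.nodup_iff_sublist]
  intro x hxx
  obtain ⟨r₁, r₂, rfl, hx₁, hx₂⟩ := List.cons_sublist_iff.1 hxx
  obtain ⟨l₁, m₁, rfl⟩ := List.append_of_mem hx₁
  obtain ⟨m₂, l₂, rfl⟩ := List.append_of_mem (List.singleton_sublist.1 hx₂)
  rw [show l₁ ++ x :: m₁ ++ (m₂ ++ x :: l₂) = l₁ ++ x :: (m₁ ++ m₂ ++ x :: l₂) by simp] at h
  obtain ⟨hpre, hloop, hsuf⟩ := chainFromTo_splice.1 h.1
  have hsum := h.2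
  rw [consecSum_splice] at hsum
  have hloop_pos : 0 < consecSum D (x :: (m₁ ++ m₂ ++ [x])) := by
    rcases hm : m₁ ++ m₂ with _ | ⟨y, m⟩
    · rw [hm] at hloop
      exact absurd (List.isChain_pair.1 hloop) C.irrefl
    · rw [hm] at hloop
      rw [List.cons_append, consecSum_cons_cons]
      exact (hpos x y (List.isChain_cons_cons.1 hloop).1.ne).trans_le le_self_add
  have hcut := le_consecSum_of_chainFromTo htri hself (chainFromTo_append_cons.2 ⟨hpre, hsuf⟩)
  rw [consecSum_append_cons] at hcut
  have hfin' : consecSum D (l₁ ++ [x]) + consecSum D (x :: l₂) ≠ ⊤ :=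
    ne_top_of_le_ne_top hfin (hsum ▸ by rw [add_right_comm]; exact le_self_add)
  refine (hcut.trans_lt (ENNReal.lt_add_right hfin' hloop_pos.ne')).ne ?_
  rw [← hsum, add_right_comm]

lemma exists_isShortestChain_gdist [Finite V] {G : SimpleGraph V} {w : V → V → ℝ≥0∞} (hGC : G ≤ C)
    (h : G.Reachable s t) : ∃ l, IsShortestChain C (gdist G w) s t l := by
  obtain ⟨l, hl, hlw⟩ := exists_chainFromTo_consecSum_eq_gdist (w := w) h
  refine ⟨l, hl.mono fun _ _ h => hGC h, le_antisymm ?_ ?_⟩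
  · exact (consecSum_le_consecSum (fun _ _ => gdist_le_of_adj) hl.1).trans hlw.le
  · exact le_consecSum_of_chainFromTo gdist_triangle gdist_self hl

lemma IsShortestChain.exists_rankPotential_lt_of_hasValley
    (htri : ∀ a b c, D a c ≤ D a b + D b c) (hself : ∀ a, D a a = 0)
    (hpos : ∀ a b, a ≠ b → 0 < D a b) (hfin : D s t ≠ ⊤)
    (hC : ∀ v a b, r v < r a → r v < r b → a ≠ b → C.Adj v a → C.Adj v b → C.Adj a b)
    (hl : IsShortestChain C D s t l) (hvalley : HasValley r l) :
    ∃ l', IsShortestChain C D s t l' ∧ rankPotential r l < rankPotential r l' := by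
  obtain ⟨l₁, a, v, b, l₂, rfl, hva, hvb⟩ := hvalley
  have hab : a ≠ b := by
    have := (List.nodup_append.1 (hl.nodup htri hself hpos hfin)).2.1
    simp_all
  obtain ⟨-, hmid, -⟩ := (chainFromTo_splice (m := [v])).1 hl.1
  simp only [List.singleton_append, List.isChain_cons_cons] at hmid
  obtain ⟨hav, hvb', -⟩ := hmid
  refine ⟨_, hl.splice (m := [v]) (m' := []) htri hself
    (List.isChain_pair.2 (hC v a b hva hvb hab hav.symm hvb')) (by simpa using htri a v b), ?_⟩
  exact consecSum_splice_lt_splice _ (m := [v]) (m' := [])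
    (by simpa using three_pow_min_add_three_pow_min_lt hva hvb)

lemma IsShortestChain.exists_rankPotential_lt_of_not_isKeptArc
    (htri : ∀ a b c, D a c ≤ D a b + D b c) (hself : ∀ a, D a a = 0)
    (hsymm : ∀ a b, D a b = D b a) (hr : Function.Injective r) {l₁ l₂ : List V} {a b : V}
    (hl : IsShortestChain C D s t (l₁ ++ a :: b :: l₂))
    (h₁ : ¬ IsKeptArc C r D a b) (h₂ : ¬ IsKeptArc C r D b a) :
    ∃ l', IsShortestChain C D s t l' ∧
      rankPotential r (l₁ ++ a :: b :: l₂) < rankPotential r l' := by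
  have hab : r a ≠ r b := hr.ne (List.isChain_append_cons_cons.1 hl.1.1).2.1.ne
  obtain ⟨z, haz, hzb, hz, hD⟩ := exists_witness_of_not_isKeptArc hsymm hab h₁ h₂
  refine ⟨_, hl.splice (m := []) (m' := [z]) htri hself (by simp [haz, hzb]) (by simp [hD]), ?_⟩
  exact consecSum_splice_lt_splice _ (m := []) (m' := [z])
    (by simpa using three_pow_min_lt_add_three_pow_min hz.le)

lemma exists_isShortestChain_isUpDown_isChain_isKeptArc [Finite V] (hr : Function.Injective r)
    (hC : ∀ v a b, r v < r a → r v < r b → a ≠ b → C.Adj v a → C.Adj v b → C.Adj a b)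
    (htri : ∀ a b c, D a c ≤ D a b + D b c) (hself : ∀ a, D a a = 0)
    (hsymm : ∀ a b, D a b = D b a) (hpos : ∀ a b, a ≠ b → 0 < D a b) (hfin : D s t ≠ ⊤)
    (h₀ : IsShortestChain C D s t l) :
    ∃ l, IsShortestChain C D s t l ∧ IsUpDown r l ∧
      l.IsChain (fun a b => IsKeptArc C r D a b ∨ IsKeptArc C r D b a) := by
  have : Fintype V := Fintype.ofFinite V
  have hfinite : {l | IsShortestChain C D s t l}.Finite :=
    (List.finite_length_le V (Fintype.card V)).subset
      fun l hl => (hl.nodup htri hself hpos hfin).length_le_card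
  obtain ⟨l, hl, hmax⟩ := Set.exists_max_image _ (rankPotential r) hfinite ⟨l, h₀⟩
  have no_improvement :
      ¬ ∃ l', IsShortestChain C D s t l' ∧ rankPotential r l < rankPotential r l' :=
    fun ⟨l', hl', hlt⟩ => (hmax l' hl').not_gt hlt
  refine ⟨l, hl, ?_, List.isChain_iff_forall_rel_of_append_cons_cons.2 ?_⟩
  · obtain ⟨m, rfl⟩ := List.head?_eq_some_iff.1 hl.1.2.1
    exact isUpDown_of_not_hasValley s m
      (fun hv => no_improvement
        (hl.exists_rankPotential_lt_of_hasValley htri hself hpos hfin hC hv))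
      (hl.1.1.imp fun a b h => hr.ne h.ne)
  · rintro a b l₁ l₂ rfl
    by_contra! hbad
    exact no_improvement
      (hl.exists_rankPotential_lt_of_not_isKeptArc htri hself hsymm hr hbad.1 hbad.2)

end ShortestChains

/-- Perfect witness search, general variant. Deleting from `G^∧π`
every arc `(x, y)` admitting an intermediate or upper triangle `{x, y, z}` with
`m_P x y = m_P x z + m_P z y` preserves, for all `s`, `t`, an up-down `s`-`t` path
of length (under the perfect metric `m_P`) the shortest `s`-`t` distance in `G`. -/
theorem stmt11 {V : Type*} {n : ℕ} (G : SimpleGraph V) (hG : G.Connected)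
    (π : Fin n ≃ V) (w : V → V → ℝ≥0∞)
    (hw_symm : ∀ a b, w a b = w b a)
    (hw_pos : ∀ a b, G.Adj a b → 0 < w a b ∧ w a b < ⊤) :
    ∀ s t : V, ∃ p : (chGraph G π).Walk s t,
      IsUpDown (rk π) p.support ∧
      (∀ d ∈ p.darts, ∃ x y : V, (d.toProd = (x, y) ∨ d.toProd = (y, x)) ∧
        rk π x < rk π y ∧
        ¬ ∃ z : V, (chGraph G π).Adj x z ∧ (chGraph G π).Adj z y ∧ rk π x < rk π z ∧
          gdist G w x y = gdist G w x z + gdist G w z y) ∧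
      wlen (fun a b => gdist G w a b) p = gdist G w s t := by
  intro s t
  have : Finite V := .of_equiv _ π
  obtain ⟨l₀, hl₀⟩ := exists_isShortestChain_gdist (w := w) (le_chGraph G π) (hG.preconnected s t)
  obtain ⟨l, hl, hud, hkept⟩ := exists_isShortestChain_isUpDown_isChain_isKeptArc
    (rk_injective π) (fun v a b => chGraph_adj_of_adj_of_adj G π) gdist_triangle gdist_self
    (gdist_comm hw_symm)
    (fun a b => gdist_pos (fun a b h => (hw_pos a b h).1) (hG.preconnected a b))
    (gdist_ne_top (fun a b h => (hw_pos a b h).2.ne) (hG.preconnected s t)) hl₀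
  obtain ⟨p, rfl⟩ := exists_walk_support_eq hl.1
  refine ⟨p, hud, fun d hd => ?_, (wlen_eq_consecSum_support _ p).trans hl.2⟩
  rcases Walk.rel_of_mem_darts hkept hd with h | h
  exacts [⟨_, _, Or.inl rfl, h⟩, ⟨_, _, Or.inr rfl, h⟩]
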